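/- Let Σ be a finite relational signature, 𝔄 a finite Σ-structure having at least one guarded set and all of whose guarded sets have size at most n, and K a set of 2n constants. Let G be the tabloid whose vertices are the injections χ : A → K with A a guarded set of 𝔄 (with labels K_χ = range(χ) and τ_χ the χ-image of the atomic type of A in 𝔄, and edges between χ and χ' iff χ ∪ χ' is an injective function), and let T be the undirected unraveling of G from any node. Then 𝔄 is guarded bisimilar to 𝔄(T): there is a nonempty guarded bisimulation between 𝔄 and 𝔄(T). -/

import Mathlib

open FirstOrder

namespace GFPaper

variable {L : FirstOrder.Language} {M N : Type*} {K V : Type*}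

/-! ### Guarded sets, guarded tuples, partial isomorphisms, guarded bisimulations -/

/-- A guarded set of a `Σ`-structure is a nonempty (finite) subset contained in the set of
components of some tuple belonging to some relation of the structure. -/
def IsGuardedSet (SM : L.Structure M) (B : Set M) : Prop :=
  B.Nonempty ∧ ∃ (n : ℕ) (R : L.Relations n) (a : Fin n → M),
    SM.RelMap R a ∧ B ⊆ Set.range a

/-- A guarded tuple is a tuple of pairwise distinct elements whose set of components is
a guarded set. -/
def IsGuardedTuple (SM : L.Structure M) {k : ℕ} (a : Fin k → M) : Prop :=
  Function.Injective a ∧ IsGuardedSet SM (Set.range a)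

/-- A partial isomorphism between two `Σ`-structures: an injective map between finite subsets
preserving and reflecting all atomic relations.  The function `toFun` is total, but only its
restriction to `dom` is meaningful. -/
structure PartialIso (SM : L.Structure M) (SN : L.Structure N) where
  dom : Set M
  finite_dom : dom.Finite
  toFun : M → N
  injOn : Set.InjOn toFun dom
  rel_iff : ∀ {n : ℕ} (R : L.Relations n) (a : Fin n → M), (∀ i, a i ∈ dom) →
    (SM.RelMap R a ↔ SN.RelMap R (fun i => toFun (a i)))

/-- The range of a partial isomorphism. -/
def PartialIso.rng {SM : L.Structure M} {SN : L.Structure N} (α : PartialIso SM SN) : Set N :=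
  α.toFun '' α.dom

/-- A guarded bisimulation between two `Σ`-structures: a nonempty family of partial
isomorphisms between finite subsets satisfying the back-and-forth conditions over guarded
sets. -/
structure GuardedBisim (SM : L.Structure M) (SN : L.Structure N) where
  Z : Set (PartialIso SM SN)
  nonempty : Z.Nonempty
  forth : ∀ α ∈ Z, ∀ B₀ : Set M, IsGuardedSet SM B₀ →
    ∃ γ ∈ Z, B₀ ⊆ γ.dom ∧ ∀ x ∈ α.dom ∩ γ.dom, α.toFun x = γ.toFun x
  back : ∀ α ∈ Z, ∀ B₁ : Set N, IsGuardedSet SN B₁ →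
    ∃ γ ∈ Z, B₁ ⊆ γ.rng ∧ ∀ x ∈ α.dom, ∀ y ∈ γ.dom, α.toFun x = γ.toFun y → x = y

/-- `𝔄₀,ā ∼_g 𝔄₁,b̄` : some guarded bisimulation contains the map `ā ↦ b̄`. -/
def GBisimTuple (SM : L.Structure M) (SN : L.Structure N) {k : ℕ}
    (a : Fin k → M) (b : Fin k → N) : Prop :=
  ∃ (Z : GuardedBisim SM SN) (α : PartialIso SM SN), α ∈ Z.Z ∧
    α.dom = Set.range a ∧ ∀ i, α.toFun (a i) = b i

/-- Guarded bisimilarity has finite index on the guarded tuples of a structure: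
there is a finite set of guarded tuples such that every guarded tuple is guarded bisimilar
to one of them. -/
def FiniteGBisimIndex (SM : L.Structure M) : Prop :=
  ∃ S : Set (Σ k : ℕ, Fin k → M), S.Finite ∧
    ∀ ⦃k : ℕ⦄ (a : Fin k → M), IsGuardedTuple SM a →
      ∃ b : Fin k → M, (⟨k, b⟩ : Σ k : ℕ, Fin k → M) ∈ S ∧
        IsGuardedTuple SM b ∧ GBisimTuple SM SM a b

/-! ### Undirected unraveling and undirected bisimulation -/

/-- `t` extends `s` by one edge (i.e. `s` is obtained from `t` by deleting its last node). -/
def ExtendsBy (G : SimpleGraph V) (v₀ : V) (s t : Σ u : V, G.Walk v₀ u) : Prop :=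
  ∃ h : G.Adj s.1 t.1, t.2 = s.2.concat h

/-- The undirected unraveling of a graph `G` from a node `v₀`: nodes are the finite walks
of `G` starting at `v₀`, and edges join each walk of positive length to the walk obtained
by deleting its last node. -/
def unraveling (G : SimpleGraph V) (v₀ : V) : SimpleGraph (Σ u : V, G.Walk v₀ u) where
  Adj s t := ExtendsBy G v₀ s t ∨ ExtendsBy G v₀ t s
  symm := ⟨fun _ _ h => h.symm⟩
  loopless := ⟨fun s h => by
    rcases h with ⟨h, _⟩ | ⟨h, _⟩ <;> exact G.loopless.irrefl s.1 h⟩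

/-- The projection sending a node of the unraveling (a walk) to its terminal node. -/
def unravelingProj (G : SimpleGraph V) (v₀ : V) : (Σ u : V, G.Walk v₀ u) → V :=
  fun s => s.1

/-- An undirected bisimulation between node-labelled undirected graphs. -/
def IsUndirectedBisim {V₀ V₁ Λ : Type*} (G₀ : SimpleGraph V₀) (G₁ : SimpleGraph V₁)
    (ℓ₀ : V₀ → Λ) (ℓ₁ : V₁ → Λ) (Z : Set (V₀ × V₁)) : Prop :=
  ∀ p ∈ Z, ℓ₀ p.1 = ℓ₁ p.2 ∧
    (∀ w₀, G₀.Adj p.1 w₀ → ∃ w₁, G₁.Adj p.2 w₁ ∧ (w₀, w₁) ∈ Z) ∧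
    (∀ w₁, G₁.Adj p.2 w₁ → ∃ w₀, G₀.Adj p.1 w₀ ∧ (w₀, w₁) ∈ Z)

/-! ### Tabloids -/

/-- A tabloid over a relational signature `L` and a set `K` of constant names: an undirected
graph where every node `v` carries a set `consts v ⊆ K` of constants and an atomic type
over `consts v`, encoded as the collection `rel v` of atomic facts over `consts v`; the
types of adjacent nodes agree over their common constants. -/
structure Tabloid (L : FirstOrder.Language) (K : Type*) (V : Type*) where
  graph : SimpleGraph V
  consts : V → Set K
  rel : ∀ (_v : V) {n : ℕ}, L.Relations n → (Fin n → K) → Prop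
  rel_mem : ∀ (v : V) {n : ℕ} (R : L.Relations n) (c : Fin n → K),
    rel v R c → ∀ i, c i ∈ consts v
  compat : ∀ (v w : V), graph.Adj v w → ∀ {n : ℕ} (R : L.Relations n) (c : Fin n → K),
    (∀ i, c i ∈ consts v ∩ consts w) → (rel v R c ↔ rel w R c)

namespace Tabloid

variable (T : Tabloid L K V)

/-- The pairs `(v, c)` with `v` a node and `c` one of its constants. -/
def Pairs : Type _ := {q : V × K // q.2 ∈ T.consts q.1}

/-- The relation `(v,c) ≈ (v',c')` iff `c = c'` and `c` belongs to the constants of every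
node on the (unique, when the tabloid is a tree) path connecting `v` and `v'`. -/
def keq (p q : T.Pairs) : Prop :=
  p.1.2 = q.1.2 ∧
    ∀ w : T.graph.Walk p.1.1 q.1.1, w.IsPath → ∀ z ∈ w.support, p.1.2 ∈ T.consts z

/-- The set of nodes `v` witnessing simultaneously the classes `[v_i, c_i]`, i.e. such that
`c_i ∈ K_v` and `[v, c_i] = [v_i, c_i]` for all `i`. -/
def classSet {n : ℕ} (p : Fin n → T.Pairs) : Set V :=
  {v | ∀ i, ∃ h : (p i).1.2 ∈ T.consts v,
    Quot.mk T.keq ⟨((v, (p i).1.2) : V × K), h⟩ = Quot.mk T.keq (p i)}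

/-- The structure `𝔄(T)` associated to a (tree) tabloid: the universe is the set of
`≈`-classes `[v,c]`, and a tuple satisfies a relation iff some single node witnesses all
classes and its atomic type contains the corresponding fact. -/
def AT [L.IsRelational] : L.Structure (Quot T.keq) where
  funMap := fun f _ => isEmptyElim f
  RelMap := fun {n} R x =>
    ∃ (v : V) (c : Fin n → K) (h : ∀ i, c i ∈ T.consts v),
      (∀ i, Quot.mk T.keq ⟨((v, c i) : V × K), h i⟩ = x i) ∧ T.rel v R c

/-- The undirected unraveling of a tabloid from a node: the unraveling of the underlying
graph, each walk carrying the labels of its terminal node. -/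
def unravel (v₀ : V) : Tabloid L K (Σ u : V, T.graph.Walk v₀ u) where
  graph := unraveling T.graph v₀
  consts := fun s => T.consts s.1
  rel := fun s => T.rel s.1
  rel_mem := fun s _ R c h i => T.rel_mem s.1 R c h i
  compat := by
    intro s t hst
    rcases (show ExtendsBy T.graph v₀ s t ∨ ExtendsBy T.graph v₀ t s from hst) with
      ⟨h, _⟩ | ⟨h, _⟩ <;> intro n R c hc
    · exact T.compat s.1 t.1 h R c hc
    · exact (T.compat t.1 s.1 h R c (fun i => ⟨(hc i).2, (hc i).1⟩)).symm

/-- An isomorphism of a tabloid onto itself: a graph automorphism preserving both labels. -/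
structure Auto where
  toEquiv : V ≃ V
  adj_iff : ∀ z z', T.graph.Adj z z' ↔ T.graph.Adj (toEquiv z) (toEquiv z')
  consts_eq : ∀ z, T.consts (toEquiv z) = T.consts z
  rel_iff : ∀ (z : V) {n : ℕ} (R : L.Relations n) (c : Fin n → K),
    T.rel (toEquiv z) R c ↔ T.rel z R c

end Tabloid

/-! ### The tabloid built from a finite model -/

/-- `χ` is the graph of a function. -/
def IsFunGraph (χ : Set (M × K)) : Prop :=
  ∀ ⦃a b b'⦄, (a, b) ∈ χ → (a, b') ∈ χ → b = b'

/-- `χ` is the graph of an injective (partial) function. -/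
def IsInjGraph (χ : Set (M × K)) : Prop :=
  ∀ ⦃a a' b⦄, (a, b) ∈ χ → (a', b) ∈ χ → a = a'

/-- The vertices of the tabloid built from a structure: injections `χ : A → K` with `A`
a guarded set, encoded via their graphs. -/
def ChiVertex (SM : L.Structure M) (K : Type*) : Type _ :=
  {χ : Set (M × K) // IsFunGraph χ ∧ IsInjGraph χ ∧ IsGuardedSet SM {a | ∃ b, (a, b) ∈ χ}}

/-- The constants of the vertex `χ`: the range of `χ`. -/
def chiConsts {SM : L.Structure M} (χ : ChiVertex SM K) : Set K :=
  {b | ∃ a, (a, b) ∈ χ.1}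

/-- The atomic type of the vertex `χ`: the image under `χ` of the atomic type of its
domain in the structure. -/
def chiRel {SM : L.Structure M} (χ : ChiVertex SM K) {n : ℕ}
    (R : L.Relations n) (c : Fin n → K) : Prop :=
  ∃ a : Fin n → M, (∀ i, (a i, c i) ∈ χ.1) ∧ SM.RelMap R a

/-- Adjacency of vertices: `χ ∪ χ'` is an injective function (and `χ ≠ χ'`). -/
def chiAdj {SM : L.Structure M} (χ χ' : ChiVertex SM K) : Prop :=
  χ ≠ χ' ∧ IsFunGraph (χ.1 ∪ χ'.1) ∧ IsInjGraph (χ.1 ∪ χ'.1)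

/-! ### The guarded fragment of first-order logic -/

/-- Formulas of the guarded fragment of first-order logic over a relational signature `L`,
with variables drawn from `ℕ`: atomic formulas (including equalities), Boolean connectives,
and guarded quantification `∃ȳ (R(x̄ȳ) ∧ φ)` and `∀ȳ (R(x̄ȳ) → φ)`. -/
inductive GFormula (L : FirstOrder.Language) : Type _ where
  | equal : ℕ → ℕ → GFormula L
  | rel : ∀ {n : ℕ}, L.Relations n → (Fin n → ℕ) → GFormula L
  | not : GFormula L → GFormula L
  | and : GFormula L → GFormula L → GFormula L
  | or : GFormula L → GFormula L → GFormula L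
  | exGuard : ∀ {n : ℕ}, L.Relations n → (Fin n → ℕ) → Set ℕ → GFormula L → GFormula L
  | allGuard : ∀ {n : ℕ}, L.Relations n → (Fin n → ℕ) → Set ℕ → GFormula L → GFormula L

namespace GFormula

/-- The free variables of a formula. -/
def free : GFormula L → Set ℕ
  | equal i j => {i, j}
  | rel _ ts => Set.range ts
  | not φ => φ.free
  | and φ ψ => φ.free ∪ ψ.free
  | or φ ψ => φ.free ∪ ψ.free
  | exGuard _ ts ys φ => (Set.range ts ∪ φ.free) \ ys
  | allGuard _ ts ys φ => (Set.range ts ∪ φ.free) \ ys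

/-- Well-formedness for the guarded fragment: in every guarded quantification
`∃ȳ (R(x̄ȳ) ∧ φ)` resp. `∀ȳ (R(x̄ȳ) → φ)` the guard atom contains all free variables
of `φ` as well as all quantified variables. -/
def IsGF : GFormula L → Prop
  | equal _ _ => True
  | rel _ _ => True
  | not φ => φ.IsGF
  | and φ ψ => φ.IsGF ∧ ψ.IsGF
  | or φ ψ => φ.IsGF ∧ ψ.IsGF
  | exGuard _ ts ys φ => φ.free ⊆ Set.range ts ∧ ys ⊆ Set.range ts ∧ φ.IsGF
  | allGuard _ ts ys φ => φ.free ⊆ Set.range ts ∧ ys ⊆ Set.range ts ∧ φ.IsGF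

/-- Satisfaction of a guarded formula in a structure under a variable assignment. -/
def Sat (SM : L.Structure M) : GFormula L → (ℕ → M) → Prop
  | equal i j, β => β i = β j
  | rel R ts, β => SM.RelMap R (fun i => β (ts i))
  | not φ, β => ¬ Sat SM φ β
  | and φ ψ, β => Sat SM φ β ∧ Sat SM ψ β
  | or φ ψ, β => Sat SM φ β ∨ Sat SM ψ β
  | exGuard R ts ys φ, β => ∃ β' : ℕ → M, (∀ x ∉ ys, β' x = β x) ∧
      SM.RelMap R (fun i => β' (ts i)) ∧ Sat SM φ β'
  | allGuard R ts ys φ, β => ∀ β' : ℕ → M, (∀ x ∉ ys, β' x = β x) →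
      SM.RelMap R (fun i => β' (ts i)) → Sat SM φ β'

/-- Every subformula of `φ` has at most `n` free variables. -/
def WidthLE (n : ℕ) : GFormula L → Prop
  | equal i j => (({i, j} : Set ℕ)).ncard ≤ n
  | rel _ ts => (Set.range ts).ncard ≤ n
  | not φ => φ.WidthLE n
  | and φ ψ => (φ.free ∪ ψ.free).ncard ≤ n ∧ φ.WidthLE n ∧ ψ.WidthLE n
  | or φ ψ => (φ.free ∪ ψ.free).ncard ≤ n ∧ φ.WidthLE n ∧ ψ.WidthLE n
  | exGuard _ ts _ φ => (Set.range ts ∪ φ.free).ncard ≤ n ∧ φ.WidthLE n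
  | allGuard _ ts _ φ => (Set.range ts ∪ φ.free).ncard ≤ n ∧ φ.WidthLE n

end GFormula

/-!
Every node `s` of the unraveling, a walk ending in an injection `χ : A → K`, gives the partial
isomorphism `a ↦ [s, χ a]` from `A` into `𝔄(T)`; together they form the guarded bisimulation.
Since the unraveling is a tree, `[s, c] = [t, c]` means that `c` labels every node on the path
from `s` to `t`; this transports atomic facts along the path, and since adjacent injections
agree on common constants, `[s, χ a] = [t, χ' a']` forces `a = a'` (back). For forth, `χ` uses
at most `n` of the `2n` constants, so a guarded set `A'` can be mapped injectively into `K`,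
agreeing with `χ` on `A ∩ A'` and fresh elsewhere; this injection is `χ` itself or adjacent to
it, and extending the walk `s` by it gives the required partial isomorphism.
-/

open SimpleGraph

/-- A vertex of maximal rank on a cycle would have two distinct neighbours of smaller rank. -/
theorem _root_.SimpleGraph.isAcyclic_of_rank {G : SimpleGraph V} (r : V → ℕ)
    (hne : ∀ ⦃u v⦄, G.Adj u v → r u ≠ r v)
    (hlower : ∀ ⦃u v w⦄, G.Adj u v → G.Adj u w → r v < r u → r w < r u → v = w) :
    G.IsAcyclic := by
  classical
  intro v c hc
  obtain ⟨m, hm, hmax⟩ := c.support.toFinset.exists_max_image r ⟨v, by simp⟩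
  rw [List.mem_toFinset] at hm
  have hc' := hc.rotate hm
  have hlt : ∀ z ∈ (c.rotate m hm).support, G.Adj m z → r z < r m := fun z hz hmz =>
    lt_of_le_of_ne (hmax z (by simpa using hz)) (hne hmz).symm
  have hnil := hc'.not_nil
  exact hc'.snd_ne_penultimate <| hlower (Walk.adj_snd hnil) (Walk.adj_penultimate hnil).symm
    (hlt _ (Walk.getVert_mem_support _ _) (Walk.adj_snd hnil))
    (hlt _ (Walk.getVert_mem_support _ _) (Walk.adj_penultimate hnil).symm)

open Set in
theorem _root_.Set.InjOn.exists_injOn_union {α β : Type*} {f : α → β} {s t : Set α}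
    (hf : InjOn f s) (ht : t.Finite) (hcard : t.encard ≤ (f '' s)ᶜ.encard) :
    ∃ g : α → β, EqOn g f s ∧ InjOn g (s ∪ t) := by
  classical
  obtain _ | ⟨⟨a⟩⟩ := isEmpty_or_nonempty α
  · exact ⟨f, eqOn_refl f s, injOn_of_injective (Function.injective_of_subsingleton f)⟩
  have : Nonempty β := ⟨f a⟩
  obtain ⟨h, hmaps, hinj⟩ := (ht.sdiff (t := s)).exists_injOn_of_encard_le
    ((encard_le_encard sdiff_subset).trans hcard)
  refine ⟨s.piecewise f h, piecewise_eqOn s f h, ?_⟩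
  rw [← union_sdiff_self]
  refine (injOn_union disjoint_sdiff_right).2 ⟨(piecewise_eqOn s f h).injOn_iff.2 hf,
    ((piecewise_eqOn_compl s f h).mono fun x hx => hx.2).injOn_iff.2 hinj, ?_⟩
  intro x hx y hy hxy
  rw [piecewise_eq_of_mem s f h hx, piecewise_eq_of_notMem s f h hy.2] at hxy
  exact hmaps hy ⟨x, hx, hxy⟩

theorem ExtendsBy.length_eq {G : SimpleGraph V} {v₀ : V} {s t : Σ u : V, G.Walk v₀ u}
    (h : ExtendsBy G v₀ s t) : t.2.length = s.2.length + 1 := by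
  obtain ⟨h, he⟩ := h
  rw [he, Walk.length_concat]

theorem ExtendsBy.unique {G : SimpleGraph V} {v₀ : V} {s t t' : Σ u : V, G.Walk v₀ u}
    (h : ExtendsBy G v₀ t s) (h' : ExtendsBy G v₀ t' s) : t = t' := by
  obtain ⟨u, w⟩ := t
  obtain ⟨u', w'⟩ := t'
  obtain ⟨h, he⟩ := h
  obtain ⟨h', he'⟩ := h'
  simp only at h h' he he'
  obtain ⟨rfl, hww⟩ := Walk.concat_inj (he.symm.trans he')
  rw [← hww, Walk.copy_rfl_rfl]

theorem unraveling_isAcyclic (G : SimpleGraph V) (v₀ : V) : (unraveling G v₀).IsAcyclic := by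
  refine isAcyclic_of_rank (fun s => s.2.length) ?_ ?_
  · rintro s t (h | h) <;> simp [h.length_eq]
  · rintro s t t' (h | h) (h' | h') ht ht'
    · simp only [h.length_eq] at ht; omega
    · simp only [h.length_eq] at ht; omega
    · simp only [h'.length_eq] at ht'; omega
    · exact h.unique h'

theorem unraveling_reachable_nil (G : SimpleGraph V) (v₀ : V) (s : Σ u : V, G.Walk v₀ u) :
    (unraveling G v₀).Reachable ⟨v₀, .nil⟩ s := by
  obtain ⟨u, w⟩ := s
  induction w using Walk.concatRec with
  | Hnil => rfl
  | Hconcat p h ih => exact ih.trans (Adj.reachable (Or.inl ⟨h, rfl⟩))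

theorem unraveling_isTree (G : SimpleGraph V) (v₀ : V) : (unraveling G v₀).IsTree where
  connected :=
    { preconnected := fun s t =>
        (unraveling_reachable_nil G v₀ s).symm.trans (unraveling_reachable_nil G v₀ t)
      nonempty := ⟨⟨v₀, .nil⟩⟩ }
  isAcyclic := unraveling_isAcyclic G v₀

def unravelingHom (G : SimpleGraph V) (v₀ : V) : unraveling G v₀ →g G where
  toFun := unravelingProj G v₀
  map_rel' := by
    rintro s t (⟨h, -⟩ | ⟨h, -⟩)
    exacts [h, h.symm]

namespace Tabloid

variable (T : Tabloid L K V)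

theorem keq_of_walk (hT : T.graph.IsAcyclic) {p q : T.Pairs} (hc : p.1.2 = q.1.2)
    (w : T.graph.Walk p.1.1 q.1.1) (hw : ∀ z ∈ w.support, p.1.2 ∈ T.consts z) :
    T.keq p q := by
  classical
  refine ⟨hc, fun w' hw' z hz => hw z (w.support_bypass_subset_support ?_)⟩
  have hw' : w' = w.bypass := congrArg Subtype.val <|
    (hT.subsingleton_path _ _).elim ⟨w', hw'⟩ ⟨w.bypass, w.bypass_isPath⟩
  rwa [← hw']

theorem keq_equivalence (hT : T.graph.IsTree) : Equivalence T.keq where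
  refl p := T.keq_of_walk hT.isAcyclic rfl .nil (by simpa using p.2)
  symm := by
    rintro p q ⟨hpq, hp⟩
    refine ⟨hpq.symm, fun w hw z hz => hpq ▸ hp w.reverse hw.reverse z ?_⟩
    rwa [Walk.support_reverse, List.mem_reverse]
  trans := by
    classical
    rintro p q r ⟨hpq, hp⟩ ⟨hqr, hq⟩
    obtain ⟨w₁⟩ := hT.connected.preconnected p.1.1 q.1.1
    obtain ⟨w₂⟩ := hT.connected.preconnected q.1.1 r.1.1
    refine T.keq_of_walk hT.isAcyclic (hpq.trans hqr) (w₁.bypass.append w₂.bypass)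
      fun z hz => ?_
    rcases (Walk.mem_support_append_iff _ _).1 hz with hz | hz
    · exact hp _ w₁.bypass_isPath z hz
    · exact hpq ▸ hq _ w₂.bypass_isPath z hz

theorem mk_eq_mk_iff (hT : T.graph.IsTree) {p q : T.Pairs} :
    Quot.mk T.keq p = Quot.mk T.keq q ↔ T.keq p q :=
  Quot.eq.trans (T.keq_equivalence hT).eqvGen_iff

theorem rel_of_walk {u v : V} (w : T.graph.Walk u v) {n : ℕ} {R : L.Relations n}
    {c : Fin n → K} (hw : ∀ i, ∀ z ∈ w.support, c i ∈ T.consts z) (h : T.rel u R c) :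
    T.rel v R c := by
  induction w with
  | nil => exact h
  | @cons u x v hadj p ih =>
    refine ih (fun i z hz => hw i z (List.mem_cons_of_mem _ hz))
      ((T.compat u x hadj R c ?_).1 h)
    exact fun i => ⟨hw i u (Walk.start_mem_support _),
      hw i x (List.mem_cons_of_mem _ (Walk.start_mem_support p))⟩

variable [L.IsRelational]

theorem relMap_AT_mk_iff (hT : T.graph.IsTree) (v : V) {n : ℕ} (R : L.Relations n)
    (c : Fin n → K) (hc : ∀ i, c i ∈ T.consts v) :
    T.AT.RelMap R (fun i => Quot.mk T.keq ⟨(v, c i), hc i⟩) ↔ T.rel v R c := by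
  classical
  refine ⟨?_, fun h => ⟨v, c, hc, fun i => rfl, h⟩⟩
  rintro ⟨u, c', hc', hcls, hrel⟩
  have hkeq : ∀ i, T.keq ⟨(u, c' i), hc' i⟩ ⟨(v, c i), hc i⟩ := fun i =>
    (T.mk_eq_mk_iff hT).1 (hcls i)
  obtain rfl : c' = c := funext fun i => (hkeq i).1
  obtain ⟨w⟩ := hT.connected.preconnected u v
  exact T.rel_of_walk w.bypass (fun i => (hkeq i).2 _ w.bypass_isPath) hrel

def nodePartialIso (hT : T.graph.IsTree) (SM : L.Structure M) (v : V) {A : Set M}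
    (hA : A.Finite) (f : M → K) (hf : ∀ a, f a ∈ T.consts v) (hinj : Set.InjOn f A)
    (hrel : ∀ {n : ℕ} (R : L.Relations n) (a : Fin n → M), (∀ i, a i ∈ A) →
      (SM.RelMap R a ↔ T.rel v R (f ∘ a))) :
    PartialIso SM T.AT where
  dom := A
  finite_dom := hA
  toFun a := Quot.mk T.keq ⟨(v, f a), hf a⟩
  injOn _ ha _ ha' h := hinj ha ha' ((T.mk_eq_mk_iff hT).1 h).1
  rel_iff R a ha := (hrel R a ha).trans (T.relMap_AT_mk_iff hT v R (f ∘ a) fun _ => hf _).symm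

end Tabloid

theorem IsGuardedSet.finite {SM : L.Structure M} {B : Set M} (h : IsGuardedSet SM B) :
    B.Finite := by
  obtain ⟨-, _, _, a, -, hB⟩ := h
  exact (Set.finite_range a).subset hB

theorem isFunGraph_graphOn (g : M → K) (A : Set M) : IsFunGraph (A.graphOn g) := by
  intro a b b' hb hb'
  rw [Set.mem_graphOn] at hb hb'
  exact hb.2.symm.trans hb'.2

theorem isInjGraph_graphOn {g : M → K} {A : Set M} (hg : Set.InjOn g A) :
    IsInjGraph (A.graphOn g) := by
  intro a a' b hb hb'
  rw [Set.mem_graphOn] at hb hb'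
  exact hg hb.1 hb'.1 (hb.2.trans hb'.2.symm)

namespace ChiVertex

variable {SM : L.Structure M}

def dom (χ : ChiVertex SM K) : Set M := {a | ∃ b, (a, b) ∈ χ.1}

theorem isGuardedSet_dom (χ : ChiVertex SM K) : IsGuardedSet SM χ.dom := χ.2.2.2

def ofInjOn (g : M → K) {A : Set M} (hA : IsGuardedSet SM A) (hg : Set.InjOn g A) :
    ChiVertex SM K :=
  ⟨A.graphOn g, isFunGraph_graphOn g A, isInjGraph_graphOn hg, by simpa [Set.mem_graphOn]⟩

theorem dom_ofInjOn (g : M → K) {A : Set M} (hA : IsGuardedSet SM A) (hg : Set.InjOn g A) :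
    (ofInjOn g hA hg).dom = A := by
  ext a
  simp [dom, ofInjOn, Set.mem_graphOn]

/-- Values outside the domain are taken among the constants of `χ`, so that `a ↦ [s, χ.fn a]`
is a total map into `𝔄(T)`. -/
theorem exists_eq_graphOn (χ : ChiVertex SM K) :
    ∃ f : M → K, χ.1 = χ.dom.graphOn f ∧ ∀ a, f a ∈ chiConsts χ := by
  classical
  obtain ⟨a₀, b₀, h₀⟩ := χ.isGuardedSet_dom.1
  refine ⟨fun a => if h : ∃ b, (a, b) ∈ χ.1 then h.choose else b₀, ?_, fun a => ?_⟩
  · ext ⟨a, b⟩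
    rw [Set.mem_graphOn]
    constructor
    · intro h
      refine ⟨⟨b, h⟩, ?_⟩
      dsimp only
      have hex : ∃ b, (a, b) ∈ χ.1 := ⟨b, h⟩
      rw [dif_pos hex]
      exact χ.2.1 hex.choose_spec h
    · rintro ⟨h, hb⟩
      change ∃ b, (a, b) ∈ χ.1 at h
      rw [dif_pos h] at hb
      have hspec := h.choose_spec
      rwa [hb] at hspec
  · dsimp only
    split_ifs with h
    exacts [⟨a, h.choose_spec⟩, ⟨a₀, h₀⟩]

noncomputable def fn (χ : ChiVertex SM K) : M → K := χ.exists_eq_graphOn.choose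

theorem eq_graphOn_fn (χ : ChiVertex SM K) : χ.1 = χ.dom.graphOn χ.fn :=
  χ.exists_eq_graphOn.choose_spec.1

theorem fn_mem_chiConsts (χ : ChiVertex SM K) (a : M) : χ.fn a ∈ chiConsts χ :=
  χ.exists_eq_graphOn.choose_spec.2 a

theorem mem_iff {χ : ChiVertex SM K} {a : M} {b : K} :
    (a, b) ∈ χ.1 ↔ a ∈ χ.dom ∧ χ.fn a = b :=
  (Set.ext_iff.1 χ.eq_graphOn_fn (a, b)).trans Set.mem_graphOn

theorem injOn_fn (χ : ChiVertex SM K) : Set.InjOn χ.fn χ.dom := fun _ ha _ ha' h =>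
  χ.2.2.1 (mem_iff.2 ⟨ha, rfl⟩) (mem_iff.2 ⟨ha', h.symm⟩)

theorem chiRel_fn_comp_iff (χ : ChiVertex SM K) {n : ℕ} (R : L.Relations n) {a : Fin n → M}
    (ha : ∀ i, a i ∈ χ.dom) : chiRel χ R (χ.fn ∘ a) ↔ SM.RelMap R a := by
  refine ⟨fun ⟨a', ha', hR⟩ => ?_, fun h => ⟨a, fun i => mem_iff.2 ⟨ha i, rfl⟩, h⟩⟩
  obtain rfl : a' = a := funext fun i => χ.2.2.1 (ha' i) (mem_iff.2 ⟨ha i, rfl⟩)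
  exact hR

/-- `χ` uses at most `n` of the `2n` constants, leaving at least `n` fresh ones for `A`. -/
theorem exists_extension {n : ℕ} (hn : ∀ B : Set M, IsGuardedSet SM B → B.ncard ≤ n)
    [Finite K] (hK : Nat.card K = 2 * n) (χ : ChiVertex SM K) {A : Set M}
    (hA : IsGuardedSet SM A) :
    ∃ χ' : ChiVertex SM K, χ'.dom = A ∧
      IsFunGraph (χ.1 ∪ χ'.1) ∧ IsInjGraph (χ.1 ∪ χ'.1) := by
  have hcard : A.encard ≤ (χ.fn '' χ.dom)ᶜ.encard := by
    have hcompl := Set.ncard_add_ncard_compl (χ.fn '' χ.dom)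
    have himage := Set.ncard_image_le (f := χ.fn) χ.isGuardedSet_dom.finite
    have hdom := hn _ χ.isGuardedSet_dom
    have hA' := hn A hA
    rw [hK] at hcompl
    rw [← hA.finite.cast_ncard_eq, ← (Set.toFinite _).cast_ncard_eq]
    exact_mod_cast (by omega : A.ncard ≤ _)
  obtain ⟨g, hgf, hg⟩ := χ.injOn_fn.exists_injOn_union hA.finite hcard
  refine ⟨ofInjOn g hA (hg.mono Set.subset_union_right), dom_ofInjOn _ _ _, ?_⟩
  have hunion : χ.1 ∪ (ofInjOn g hA (hg.mono Set.subset_union_right)).1 =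
      (χ.dom ∪ A).graphOn g := by
    rw [Set.graphOn_union, χ.eq_graphOn_fn, Set.graphOn_inj.2 hgf.symm]
    rfl
  rw [hunion]
  exact ⟨isFunGraph_graphOn g _, isInjGraph_graphOn hg⟩

theorem eq_of_walk {H : SimpleGraph (ChiVertex SM K)}
    (hH : ∀ χ χ', H.Adj χ χ' → IsInjGraph (χ.1 ∪ χ'.1)) {χ χ' : ChiVertex SM K}
    (w : H.Walk χ χ') {a a' : M} {b : K} (hw : ∀ z ∈ w.support, b ∈ chiConsts z)
    (ha : (a, b) ∈ χ.1) (ha' : (a', b) ∈ χ'.1) : a = a' := by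
  induction w generalizing a with
  | @nil ψ => exact ψ.2.2.1 ha ha'
  | @cons χ ψ _ hadj p ih =>
    obtain ⟨c, hc⟩ := hw ψ (List.mem_cons_of_mem _ p.start_mem_support)
    obtain rfl : a = c := hH χ ψ hadj (Or.inl ha) (Or.inr hc)
    exact ih (fun z hz => hw z (List.mem_cons_of_mem _ hz)) hc ha'

end ChiVertex

section Unraveling

variable {SM : L.Structure M} {G : Tabloid L K (ChiVertex SM K)} {v₀ : ChiVertex SM K}

theorem fn_mem_unravel_consts (hconsts : ∀ χ : ChiVertex SM K, G.consts χ = chiConsts χ)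
    (s : Σ u : ChiVertex SM K, G.graph.Walk v₀ u) (a : M) :
    s.1.fn a ∈ (G.unravel v₀).consts s :=
  (hconsts s.1).symm ▸ s.1.fn_mem_chiConsts a

variable [L.IsRelational]

noncomputable def nodeIso (hconsts : ∀ χ : ChiVertex SM K, G.consts χ = chiConsts χ)
    (hrel : ∀ (χ : ChiVertex SM K) {m : ℕ} (R : L.Relations m) (c : Fin m → K),
      G.rel χ R c ↔ chiRel χ R c)
    (s : Σ u : ChiVertex SM K, G.graph.Walk v₀ u) : PartialIso SM (G.unravel v₀).AT :=
  (G.unravel v₀).nodePartialIso (unraveling_isTree G.graph v₀) SM s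
    s.1.isGuardedSet_dom.finite s.1.fn (fn_mem_unravel_consts hconsts s)
    s.1.injOn_fn fun R _ ha => ((s.1.chiRel_fn_comp_iff R ha).symm.trans (hrel s.1 R _).symm)

variable (hconsts : ∀ χ : ChiVertex SM K, G.consts χ = chiConsts χ)
  (hrel : ∀ (χ : ChiVertex SM K) {m : ℕ} (R : L.Relations m) (c : Fin m → K),
    G.rel χ R c ↔ chiRel χ R c)

theorem nodeIso_toFun_eq_of_adj
    (hgraph : ∀ χ χ' : ChiVertex SM K, G.graph.Adj χ χ' ↔ chiAdj χ χ')
    {s t : Σ u : ChiVertex SM K, G.graph.Walk v₀ u}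
    (hst : (G.unravel v₀).graph.Adj s t) {a : M} (hs : a ∈ s.1.dom) (ht : a ∈ t.1.dom) :
    (nodeIso hconsts hrel s).toFun a = (nodeIso hconsts hrel t).toFun a := by
  have hfun := ((hgraph _ _).1 ((unravelingHom G.graph v₀).map_adj hst)).2.1
  have hfn : s.1.fn a = t.1.fn a :=
    hfun (Or.inl (ChiVertex.mem_iff.2 ⟨hs, rfl⟩)) (Or.inr (ChiVertex.mem_iff.2 ⟨ht, rfl⟩))
  refine Quot.sound <| (G.unravel v₀).keq_of_walk (unraveling_isAcyclic G.graph v₀) hfn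
    hst.toWalk fun z hz => ?_
  rw [Adj.support_toWalk, List.mem_pair] at hz
  rcases hz with rfl | rfl
  · exact fn_mem_unravel_consts hconsts z a
  · show s.1.fn a ∈ G.consts z.1
    rw [hfn, hconsts]
    exact z.1.fn_mem_chiConsts a

theorem eq_of_nodeIso_toFun_eq
    (hgraph : ∀ χ χ' : ChiVertex SM K, G.graph.Adj χ χ' ↔ chiAdj χ χ')
    {s t : Σ u : ChiVertex SM K, G.graph.Walk v₀ u} {a a' : M}
    (ha : a ∈ s.1.dom) (ha' : a' ∈ t.1.dom)
    (h : (nodeIso hconsts hrel s).toFun a = (nodeIso hconsts hrel t).toFun a') : a = a' := by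
  classical
  obtain ⟨hfn, hpath⟩ := ((G.unravel v₀).mk_eq_mk_iff (unraveling_isTree G.graph v₀)).1 h
  obtain ⟨w⟩ := (unraveling_isTree G.graph v₀).connected.preconnected s t
  refine ChiVertex.eq_of_walk (fun χ χ' h => ((hgraph χ χ').1 h).2.2)
    (w.bypass.map (unravelingHom G.graph v₀)) (b := s.1.fn a) (fun z hz => ?_)
    (ChiVertex.mem_iff.2 ⟨ha, rfl⟩) (ChiVertex.mem_iff.2 ⟨ha', hfn.symm⟩)
  rw [Walk.support_map, List.mem_map] at hz
  obtain ⟨y, hy, rfl⟩ := hz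
  exact hconsts y.1 ▸ hpath _ w.bypass_isPath y hy

theorem exists_nodeIso_forth
    (hgraph : ∀ χ χ' : ChiVertex SM K, G.graph.Adj χ χ' ↔ chiAdj χ χ')
    {n : ℕ} (hn : ∀ B : Set M, IsGuardedSet SM B → B.ncard ≤ n)
    [Finite K] (hK : Nat.card K = 2 * n) (s : Σ u : ChiVertex SM K, G.graph.Walk v₀ u)
    {A : Set M} (hA : IsGuardedSet SM A) :
    ∃ t, A ⊆ t.1.dom ∧ ∀ a ∈ s.1.dom ∩ t.1.dom,
      (nodeIso hconsts hrel s).toFun a = (nodeIso hconsts hrel t).toFun a := by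
  obtain ⟨χ, hdom, hfun, hinj⟩ := s.1.exists_extension hn hK hA
  by_cases hχ : χ = s.1
  · exact ⟨s, hχ ▸ hdom.ge, fun _ _ => rfl⟩
  · have hadj : G.graph.Adj s.1 χ := (hgraph _ _).2 ⟨Ne.symm hχ, hfun, hinj⟩
    exact ⟨⟨χ, s.2.concat hadj⟩, hdom.ge, fun a ha =>
      nodeIso_toFun_eq_of_adj hconsts hrel hgraph (Or.inl ⟨hadj, rfl⟩) ha.1 ha.2⟩

theorem exists_nodeIso_back
    (hgraph : ∀ χ χ' : ChiVertex SM K, G.graph.Adj χ χ' ↔ chiAdj χ χ')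
    (s : Σ u : ChiVertex SM K, G.graph.Walk v₀ u) {B : Set (Quot (G.unravel v₀).keq)}
    (hB : IsGuardedSet (G.unravel v₀).AT B) :
    ∃ t, B ⊆ (nodeIso hconsts hrel t).rng ∧ ∀ a ∈ s.1.dom, ∀ a' ∈ t.1.dom,
      (nodeIso hconsts hrel s).toFun a = (nodeIso hconsts hrel t).toFun a' → a = a' := by
  obtain ⟨-, _, R, x, ⟨t, c, hc, hcls, hR⟩, hBx⟩ := hB
  obtain ⟨g, hg, -⟩ := (hrel t.1 R c).1 hR
  refine ⟨t, hBx.trans ?_, fun _ ha _ ha' => eq_of_nodeIso_toFun_eq hconsts hrel hgraph ha ha'⟩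
  rintro _ ⟨i, rfl⟩
  obtain ⟨hgi, hfn⟩ := ChiVertex.mem_iff.1 (hg i)
  refine ⟨g i, hgi, ?_⟩
  rw [← hcls i]
  exact congrArg (Quot.mk _) (Subtype.ext (Prod.ext rfl hfn))

end Unraveling

theorem structure_gbisim_unravel_general {L : FirstOrder.Language} [L.IsRelational] {M : Type*}
    (SM : L.Structure M) (n : ℕ)
    (hn : ∀ B : Set M, IsGuardedSet SM B → B.ncard ≤ n)
    {K : Type*} [Finite K] (hK : Nat.card K = 2 * n)
    (G : Tabloid L K (ChiVertex SM K))
    (hgraph : ∀ χ χ' : ChiVertex SM K, G.graph.Adj χ χ' ↔ chiAdj χ χ')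
    (hconsts : ∀ χ : ChiVertex SM K, G.consts χ = chiConsts χ)
    (hrel : ∀ (χ : ChiVertex SM K) {m : ℕ} (R : L.Relations m) (c : Fin m → K),
      G.rel χ R c ↔ chiRel χ R c)
    (v₀ : ChiVertex SM K) :
    Nonempty (GuardedBisim SM (G.unravel v₀).AT) := by
  let Φ := nodeIso (v₀ := v₀) hconsts hrel
  refine ⟨⟨Set.range Φ, ⟨_, ⟨v₀, .nil⟩, rfl⟩, ?_, ?_⟩⟩
  · rintro _ ⟨s, rfl⟩ A hA
    obtain ⟨t, hAt, hagree⟩ := exists_nodeIso_forth hconsts hrel hgraph hn hK s hA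
    exact ⟨Φ t, ⟨t, rfl⟩, hAt, hagree⟩
  · rintro _ ⟨s, rfl⟩ B hB
    obtain ⟨t, hBt, hinj⟩ := exists_nodeIso_back hconsts hrel hgraph s hB
    exact ⟨Φ t, ⟨t, rfl⟩, hBt, hinj⟩

/-- Let `𝔄` be a finite structure having at least one guarded set and all
of whose guarded sets have size at most `n`, let `K` have `2n` constants, let `G` be the
tabloid of injections `χ : A → K` of guarded sets into `K` (with the labels and adjacency as
described), and `T` its undirected unraveling from any node. Then `𝔄` is guarded bisimilar
to `𝔄(T)`. -/
theorem structure_gbisim_unravel {L : FirstOrder.Language} [L.IsRelational] {M : Type*}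
    [Finite M] (SM : L.Structure M) (n : ℕ)
    (hex : ∃ B : Set M, IsGuardedSet SM B)
    (hn : ∀ B : Set M, IsGuardedSet SM B → B.ncard ≤ n)
    {K : Type*} [Finite K] (hK : Nat.card K = 2 * n)
    (G : Tabloid L K (ChiVertex SM K))
    (hgraph : ∀ χ χ' : ChiVertex SM K, G.graph.Adj χ χ' ↔ chiAdj χ χ')
    (hconsts : ∀ χ : ChiVertex SM K, G.consts χ = chiConsts χ)
    (hrel : ∀ (χ : ChiVertex SM K) {m : ℕ} (R : L.Relations m) (c : Fin m → K),
      G.rel χ R c ↔ chiRel χ R c)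
    (v₀ : ChiVertex SM K) :
    Nonempty (GuardedBisim SM (G.unravel v₀).AT) :=
  structure_gbisim_unravel_general SM n hn hK G hgraph hconsts hrel v₀

end GFPaper
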